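/- For the Black-Scholes call price P(S,K,τ,σ) with d± = log(S/K)/(σ√τ) ± σ√τ/2, the gamma satisfies ∂²P/∂S² = φ(d₊)/(S·σ·√τ). -/

import Mathlib

open Real MeasureTheory

/-- Standard normal probability density function. -/
noncomputable def stdPdf (x : ℝ) : ℝ := (Real.sqrt (2 * Real.pi))⁻¹ * Real.exp (-x ^ 2 / 2)

/-- Standard normal cumulative distribution function. -/
noncomputable def stdCdf (x : ℝ) : ℝ := ∫ t in Set.Iic x, stdPdf t

/-- Black-Scholes call price. -/
noncomputable def bsPrice (S K τ σ : ℝ) : ℝ :=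
  S * stdCdf (Real.log (S / K) / (σ * Real.sqrt τ) + σ * Real.sqrt τ / 2)
    - K * stdCdf (Real.log (S / K) / (σ * Real.sqrt τ) - σ * Real.sqrt τ / 2)

/-!
Since `d₊' = d₋' = 1 / (S σ √τ)` and `S φ(d₊) = K φ(d₋)`, the density terms produced by the
product and chain rules cancel, leaving the delta `∂P/∂S = Φ(d₊)`; one more chain rule gives
the gamma `φ(d₊) d₊'`.
-/

theorem hasDerivAt_integral_Iic {E : Type*} [NormedAddCommGroup E] [NormedSpace ℝ E]
    [CompleteSpace E] {f : ℝ → E} (hint : Integrable f) (hcont : Continuous f) (x : ℝ) :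
    HasDerivAt (fun y => ∫ t in Set.Iic y, f t) (f x) x := by
  have hsplit : ∀ y, ∫ t in Set.Iic y, f t = (∫ t in Set.Iic 0, f t) + ∫ t in (0 : ℝ)..y, f t :=
    fun y => by
      rw [← intervalIntegral.integral_Iic_sub_Iic hint.integrableOn hint.integrableOn,
        add_sub_cancel]
  rw [funext hsplit]
  exact (intervalIntegral.integral_hasDerivAt_right hint.intervalIntegrable
    (hcont.stronglyMeasurableAtFilter _ _) hcont.continuousAt).const_add _

theorem integrable_stdPdf : Integrable stdPdf := by
  convert (integrable_exp_neg_mul_sq (b := (2 : ℝ)⁻¹) (by norm_num)).const_mul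
    (Real.sqrt (2 * π))⁻¹ using 2 with x
  rw [stdPdf, neg_div, neg_mul, div_eq_inv_mul]

theorem continuous_stdPdf : Continuous stdPdf := by
  unfold stdPdf
  fun_prop

theorem hasDerivAt_stdCdf (x : ℝ) : HasDerivAt stdCdf (stdPdf x) x :=
  hasDerivAt_integral_Iic integrable_stdPdf continuous_stdPdf x

/-- `d₊² - d₋² = 2 log (s / K)`, so `φ(d₊) / φ(d₋) = K / s`. -/
theorem mul_stdPdf_dPlus_eq_mul_stdPdf_dMinus {s K c : ℝ} (hs : 0 < s) (hK : 0 < K)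
    (hc : c ≠ 0) :
    s * stdPdf (Real.log (s / K) / c + c / 2) = K * stdPdf (Real.log (s / K) / c - c / 2) := by
  have hexp : Real.exp (Real.log (s / K)) = s / K := Real.exp_log (by positivity)
  have hsq : -(Real.log (s / K) / c + c / 2) ^ 2 / 2
      = -(Real.log (s / K) / c - c / 2) ^ 2 / 2 - Real.log (s / K) := by
    field_simp
    ring
  rw [stdPdf, stdPdf, hsq, Real.exp_sub, hexp]
  field_simp

theorem hasDerivAt_log_div_div {s K c : ℝ} (hs : s ≠ 0) (hK : K ≠ 0) :
    HasDerivAt (fun u => Real.log (u / K) / c) (1 / (s * c)) s := by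
  refine ((((hasDerivAt_id' s).div_const K).log (div_ne_zero hs hK)).div_const c).congr_deriv ?_
  field_simp

theorem hasDerivAt_bsPrice {s K τ σ : ℝ} (hs : 0 < s) (hK : 0 < K) (hc : σ * Real.sqrt τ ≠ 0) :
    HasDerivAt (fun u => bsPrice u K τ σ)
      (stdCdf (Real.log (s / K) / (σ * Real.sqrt τ) + σ * Real.sqrt τ / 2)) s := by
  set c := σ * Real.sqrt τ
  have hd := hasDerivAt_log_div_div (c := c) hs.ne' hK.ne'
  have hplus := (hasDerivAt_stdCdf _).comp s (hd.add_const (c / 2))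
  have hminus := (hasDerivAt_stdCdf _).comp s (hd.sub_const (c / 2))
  refine (((hasDerivAt_id' s).mul hplus).sub (hminus.const_mul K)).congr_deriv ?_
  have hcancel := mul_stdPdf_dPlus_eq_mul_stdPdf_dMinus hs hK hc
  rw [Function.comp_apply]
  linear_combination (1 / (s * c)) * hcancel

/-- The Black-Scholes gamma: ∂²P/∂S² = φ(d₊)/(S·σ·√τ). -/
theorem bs_gamma (S K τ σ : ℝ) (hS : 0 < S) (hK : 0 < K) (hτ : 0 < τ) (hσ : 0 < σ) :
    deriv (deriv (fun s => bsPrice s K τ σ)) S =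
      stdPdf (Real.log (S / K) / (σ * Real.sqrt τ) + σ * Real.sqrt τ / 2) /
        (S * σ * Real.sqrt τ) := by
  have hc : σ * Real.sqrt τ ≠ 0 := by positivity
  have hdelta : deriv (fun s => bsPrice s K τ σ) =ᶠ[nhds S]
      fun s => stdCdf (Real.log (s / K) / (σ * Real.sqrt τ) + σ * Real.sqrt τ / 2) := by
    filter_upwards [eventually_gt_nhds hS] with s hs
    exact (hasDerivAt_bsPrice hs hK hc).deriv
  have hgamma := (hasDerivAt_stdCdf _).comp S
    ((hasDerivAt_log_div_div (c := σ * Real.sqrt τ) hS.ne' hK.ne').add_const (σ * Real.sqrt τ / 2))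
  rw [hdelta.deriv_eq]
  refine hgamma.deriv.trans ?_
  field_simp
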